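/- Let L be a regular language and dr_L : Q(rev(L)) → Q(L) the map K ↦ (Σ* \ rev(K))⁻¹L on finite unions of left derivatives. Then dr_L is an order-reversing bijection between the lattice Q(rev(L)) of finite unions of left derivatives of rev(L) and the lattice Q(L) of finite unions of left derivatives of L, both ordered by inclusion. -/

import Mathlib

/-- The left derivative `u⁻¹L = {w : uw ∈ L}`. -/
def leftDeriv {α : Type*} (u : List α) (L : Set (List α)) : Set (List α) :=
  {w | u ++ w ∈ L}

/-- The left quotient `U⁻¹L = ⋃_{u ∈ U} u⁻¹L`. -/
def leftQuot {α : Type*} (U : Set (List α)) (L : Set (List α)) : Set (List α) :=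
  ⋃ u ∈ U, leftDeriv u L

/-- The reverse language `rev(L) = {rev w : w ∈ L}`. -/
def revLang {α : Type*} (L : Set (List α)) : Set (List α) :=
  List.reverse '' L

/-- The join-semilattice of all finite unions of left derivatives of `L`. -/
def Qset {α : Type*} (L : Set (List α)) : Set (Set (List α)) :=
  {M | ∃ s : Finset (List α), M = ⋃ u ∈ s, leftDeriv u L}

/-- The map `dr_L : K ↦ (Σ* \ rev K)⁻¹L`. -/
def drl {α : Type*} (L : Set (List α)) (K : Set (List α)) : Set (List α) :=
  leftQuot ((revLang K)ᶜ) L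

lemma mem_revLang {α : Type*} {L : Set (List α)} {u : List α} :
    u ∈ revLang L ↔ u.reverse ∈ L := by
  constructor
  · rintro ⟨v, hv, rfl⟩; simpa
  · intro h; exact ⟨u.reverse, h, by simp⟩

lemma revLang_revLang {α : Type*} (L : Set (List α)) : revLang (revLang L) = L := by
  ext u; simp [mem_revLang]

lemma mem_drl {α : Type*} {L K : Set (List α)} {w : List α} :
    w ∈ drl L K ↔ ¬ leftDeriv w.reverse (revLang L) ⊆ K := by
  simp only [drl, leftQuot, Set.mem_iUnion, Set.not_subset]
  constructor
  · rintro ⟨u, hu, hw⟩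
    refine ⟨u.reverse, ?_, ?_⟩
    · show w.reverse ++ u.reverse ∈ revLang L
      rw [mem_revLang]
      have hw' : u ++ w ∈ L := hw
      simpa using hw'
    · simpa [mem_revLang] using hu
  · rintro ⟨x, hx1, hx2⟩
    refine ⟨x.reverse, ?_, ?_⟩
    · simpa [mem_revLang] using hx2
    · have : w.reverse ++ x ∈ revLang L := hx1
      rw [mem_revLang] at this
      show x.reverse ++ w ∈ L; simpa using this

lemma drl_antitone {α : Type*} (L : Set (List α)) {K K' : Set (List α)} (h : K ⊆ K') :
    drl L K' ⊆ drl L K := by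
  intro w hw
  rw [mem_drl] at hw ⊢
  exact fun hs => hw (hs.trans h)

/-- If `L` has finitely many left derivatives, every left quotient is a finite union of
left derivatives. -/
lemma leftQuot_mem_Qset {α : Type*} {L : Set (List α)}
    (hfin : (Set.range fun u => leftDeriv u L).Finite) (S : Set (List α)) :
    leftQuot S L ∈ Qset L := by
  set f : List α → Set (List α) := fun u => leftDeriv u L with hf
  have h1 : (f '' S).Finite := hfin.subset (Set.image_subset_range _ _)
  have h2 : ∃ t ⊆ f '' S, t.Finite ∧ t = f '' S := ⟨f '' S, le_refl _, h1, rfl⟩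
  rw [Set.exists_subset_image_finite_and] at h2
  obtain ⟨t, hts, htfin, himg⟩ := h2
  refine ⟨htfin.toFinset, ?_⟩
  ext w
  simp only [leftQuot, Set.mem_iUnion, Set.Finite.mem_toFinset]
  constructor
  · rintro ⟨u, huS, hw⟩
    have : f u ∈ f '' t := himg ▸ Set.mem_image_of_mem f huS
    obtain ⟨v, hvt, hfv⟩ := this
    exact ⟨v, hvt, by show w ∈ f v; rw [hfv]; exact hw⟩
  · rintro ⟨u, hut, hw⟩
    exact ⟨u, hts hut, hw⟩

lemma finite_derivs {α : Type*} {n : ℕ} {L : Set (List α)} (M : DFA α (Fin n))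
    (hML : ∀ w : List α, w ∈ M.accepts ↔ w ∈ L) :
    (Set.range fun u => leftDeriv u L).Finite := by
  have key : ∀ u, leftDeriv u L = {w | M.evalFrom (M.eval u) w ∈ M.accept} := by
    intro u
    ext w
    have : u ++ w ∈ L ↔ M.eval (u ++ w) ∈ M.accept := by
      rw [← hML]; rfl
    simpa [leftDeriv, DFA.eval, DFA.evalFrom_of_append] using this
  have : (Set.range fun u => leftDeriv u L) ⊆
      Set.range fun q : Fin n => {w | M.evalFrom q w ∈ M.accept} := by
    rintro _ ⟨u, rfl⟩
    exact ⟨M.eval u, (key u).symm⟩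
  exact (Set.finite_range _).subset this

lemma finite_derivs_rev {α : Type*} {n : ℕ} {L : Set (List α)} (M : DFA α (Fin n))
    (hML : ∀ w : List α, w ∈ M.accepts ↔ w ∈ L) :
    (Set.range fun u => leftDeriv u (revLang L)).Finite := by
  have key : ∀ u, leftDeriv u (revLang L) =
      {w | M.evalFrom (M.eval w.reverse) u.reverse ∈ M.accept} := by
    intro u
    ext w
    have h1 : u ++ w ∈ revLang L ↔ w.reverse ++ u.reverse ∈ L := by
      rw [mem_revLang]; simp
    have h2 : w.reverse ++ u.reverse ∈ L ↔ M.eval (w.reverse ++ u.reverse) ∈ M.accept := by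
      rw [← hML]; rfl
    simpa [leftDeriv, DFA.eval, DFA.evalFrom_of_append, h1] using h2
  have : (Set.range fun u => leftDeriv u (revLang L)) ⊆
      Set.range fun p : Set (Fin n) => {w : List α | M.eval w.reverse ∈ p} := by
    rintro _ ⟨u, rfl⟩
    exact ⟨{q | M.evalFrom q u.reverse ∈ M.accept}, (key u).symm⟩
  exact (Set.finite_range _).subset this

/-- The key identity: for `K ∈ Q(rev L)`, `dr_{rev L} (dr_L K) = K`. -/
lemma drl_drl {α : Type*} {L K : Set (List α)} (hK : K ∈ Qset (revLang L)) :
    drl (revLang L) (drl L K) = K := by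
  obtain ⟨s, rfl⟩ := hK
  ext x
  rw [mem_drl, revLang_revLang]
  constructor
  · intro h
    rw [Set.not_subset] at h
    obtain ⟨w, hw1, hw2⟩ := h
    rw [mem_drl, not_not] at hw2
    apply hw2
    show w.reverse ++ x ∈ revLang L
    rw [mem_revLang]
    have : x.reverse ++ w ∈ L := hw1
    simpa using this
  · intro hx
    simp only [Set.mem_iUnion] at hx
    obtain ⟨u, hus, hxu⟩ := hx
    rw [Set.not_subset]
    refine ⟨u.reverse, ?_, ?_⟩
    · show x.reverse ++ u.reverse ∈ L
      have : u ++ x ∈ revLang L := hxu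
      rw [mem_revLang] at this
      simpa using this
    · rw [mem_drl, not_not]
      intro y hy
      have : u ++ y ∈ revLang L := by
        have h' : u.reverse.reverse ++ y ∈ revLang L := hy
        simpa using h'
      exact Set.mem_iUnion.2 ⟨u, Set.mem_iUnion.2 ⟨hus, this⟩⟩

lemma drl_drl' {α : Type*} {L K : Set (List α)} (hK : K ∈ Qset L) :
    drl L (drl (revLang L) K) = K := by
  have h : K ∈ Qset (revLang (revLang L)) := by rwa [revLang_revLang]
  have := drl_drl h
  rwa [revLang_revLang] at this

/-- For a regular language `L`, the map `dr_L : K ↦ (Σ* \ rev K)⁻¹L` is an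
order-reversing bijection from the lattice `Q(rev L)` of finite unions of left
derivatives of `rev L` onto the lattice `Q(L)`, both ordered by inclusion. -/
theorem drl_orderReversing_bijection {α : Type*} (L : Set (List α))
    (hreg : ∃ (n : ℕ) (M : DFA α (Fin n)), ∀ w : List α, w ∈ M.accepts ↔ w ∈ L) :
    Set.BijOn (drl L) (Qset (revLang L)) (Qset L) ∧
    (∀ K ∈ Qset (revLang L), ∀ K' ∈ Qset (revLang L),
      (K ⊆ K' ↔ drl L K' ⊆ drl L K)) := by
  obtain ⟨n, M, hML⟩ := hreg
  have hfin : (Set.range fun u => leftDeriv u L).Finite := finite_derivs M hML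
  have hfinrev : (Set.range fun u => leftDeriv u (revLang L)).Finite :=
    finite_derivs_rev M hML
  refine ⟨⟨?_, ?_, ?_⟩, ?_⟩
  · -- MapsTo
    intro K _
    exact leftQuot_mem_Qset hfin _
  · -- InjOn
    intro K hK K' hK' h
    rw [← drl_drl hK, ← drl_drl hK', h]
  · -- SurjOn
    intro K' hK'
    refine ⟨drl (revLang L) K', ?_, drl_drl' hK'⟩
    exact leftQuot_mem_Qset hfinrev _
  · -- order-reversing
    intro K hK K' hK'
    constructor
    · exact fun h => drl_antitone L h
    · intro h
      have := drl_antitone (revLang L) h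
      rwa [drl_drl hK, drl_drl hK'] at this
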